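/- arXiv:2510.22026 — 7 statements merged into one kernel-verified Lean document; each statement's English description precedes it below -/
import Mathlib

section
/- Let n ≥ 1, β > 0 with e^β ≥ n, and let θ₁, …, θₙ ∈ S^{d−1} be any unit vectors. Then for every j ∈ {1,…,n}, the alignment of token j with its attention vector satisfies ⟨θⱼ, Aⱼ(Θ)⟩ ≥ 1/(n e^β); in particular it is strictly positive. -/
/-! Writing `cₖ = ⟨θⱼ, θₖ⟩ ∈ [-1, 1]` with `cⱼ = 1`, the alignment is `N / Z` with
`Z = ∑ₖ e^{β cₖ} ≤ n e^β` and `N = ∑ₖ e^{β cₖ} cₖ`. Every term of `N` is at least `-1`,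
since `e^{β c} ≤ 1` when `c < 0`, and the term `k = j` equals `e^β`; hence
`N ≥ e^β - (n - 1) ≥ 1`, and `N / Z ≥ 1 / (n e^β)`. -/

open Filter Real
open scoped RealInnerProductSpace BigOperators

/-- Attention vector `A_j(Θ)` with `Q = K = V = I_d` and inverse temperature `β`. -/
noncomputable def attn {d n : ℕ} (β : ℝ) (θ : Fin n → EuclideanSpace ℝ (Fin d)) (j : Fin n) :
    EuclideanSpace ℝ (Fin d) :=
  (∑ l, Real.exp (β * ⟪θ j, θ l⟫))⁻¹ • ∑ k, Real.exp (β * ⟪θ j, θ k⟫) • θ k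

theorem inner_attn_eq {d n : ℕ} (β : ℝ) (θ : Fin n → EuclideanSpace ℝ (Fin d)) (j : Fin n) :
    ⟪θ j, attn β θ j⟫ =
      (∑ k, exp (β * ⟪θ j, θ k⟫) * ⟪θ j, θ k⟫) / ∑ k, exp (β * ⟪θ j, θ k⟫) := by
  simp only [attn, inner_smul_right, inner_sum, div_eq_inv_mul]

theorem neg_one_le_exp_mul_mul {β c : ℝ} (hβ : 0 ≤ β) (hc : -1 ≤ c) :
    -1 ≤ exp (β * c) * c := by
  rcases le_or_gt 0 c with hc0 | hc0
  · nlinarith [exp_pos (β * c)]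
  · have : exp (β * c) ≤ 1 := exp_le_one_iff.2 (mul_nonpos_of_nonneg_of_nonpos hβ hc0.le)
    nlinarith

section SoftmaxAverage

variable {ι : Type*} [Fintype ι] {β : ℝ} {c : ι → ℝ}

theorem sum_exp_mul_le_card_mul_exp (hβ : 0 ≤ β) (hc : ∀ k, c k ≤ 1) :
    ∑ k, exp (β * c k) ≤ Fintype.card ι * exp β := by
  calc ∑ k, exp (β * c k) ≤ ∑ _k : ι, exp β :=
        Finset.sum_le_sum fun k _ => exp_le_exp.2 (mul_le_of_le_one_right hβ (hc k))
    _ = Fintype.card ι * exp β := by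
        rw [Finset.sum_const, Finset.card_univ, nsmul_eq_mul]

theorem exp_add_one_sub_card_le_sum_exp_mul_mul (hβ : 0 ≤ β) (hc : ∀ k, -1 ≤ c k)
    {j : ι} (hj : c j = 1) :
    exp β + 1 - Fintype.card ι ≤ ∑ k, exp (β * c k) * c k := by
  have hshift : exp β + 1 ≤ ∑ k, (exp (β * c k) * c k + 1) := by
    have := Finset.single_le_sum (f := fun k => exp (β * c k) * c k + 1)
      (fun k _ => by linarith [neg_one_le_exp_mul_mul hβ (hc k)]) (Finset.mem_univ j)
    simpa [hj] using this
  rw [Finset.sum_add_distrib, Finset.sum_const, Finset.card_univ, nsmul_one] at hshift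
  linarith

theorem one_div_card_mul_exp_le_softmax_average (hc : ∀ k, |c k| ≤ 1) {j : ι} (hj : c j = 1)
    (hcard : (Fintype.card ι : ℝ) ≤ exp β) :
    1 / (Fintype.card ι * exp β) ≤ (∑ k, exp (β * c k) * c k) / ∑ k, exp (β * c k) := by
  have : Nonempty ι := ⟨j⟩
  have hβ : 0 ≤ β :=
    one_le_exp_iff.1 (le_trans (by exact_mod_cast Fintype.card_pos) hcard)
  have hZpos : 0 < ∑ k, exp (β * c k) :=
    Finset.sum_pos (fun k _ => exp_pos _) ⟨j, Finset.mem_univ j⟩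
  have hN : 1 ≤ ∑ k, exp (β * c k) * c k := by
    linarith [exp_add_one_sub_card_le_sum_exp_mul_mul hβ (fun k => (abs_le.1 (hc k)).1) hj]
  calc 1 / (Fintype.card ι * exp β) ≤ 1 / ∑ k, exp (β * c k) :=
        one_div_le_one_div_of_le hZpos
          (sum_exp_mul_le_card_mul_exp hβ fun k => (abs_le.1 (hc k)).2)
    _ ≤ (∑ k, exp (β * c k) * c k) / ∑ k, exp (β * c k) :=
        div_le_div_of_nonneg_right hN hZpos.le

end SoftmaxAverage

theorem alignment_lower_bound_general {d n : ℕ} (β : ℝ)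
    (hnβ : (n : ℝ) ≤ Real.exp β)
    (θ : Fin n → EuclideanSpace ℝ (Fin d)) (hθ : ∀ j, ‖θ j‖ = 1) (j : Fin n) :
    1 / (n * Real.exp β) ≤ ⟪θ j, attn β θ j⟫ ∧ 0 < ⟪θ j, attn β θ j⟫ := by
  have hc : ∀ k, |⟪θ j, θ k⟫| ≤ 1 := fun k =>
    (abs_real_inner_le_norm _ _).trans_eq (by rw [hθ j, hθ k, one_mul])
  have hcj : ⟪θ j, θ j⟫ = 1 := by rw [real_inner_self_eq_norm_sq, hθ j, one_pow]
  have hbound := one_div_card_mul_exp_le_softmax_average hc hcj (by simpa using hnβ)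
  rw [Fintype.card_fin, ← inner_attn_eq] at hbound
  have hpos : (0 : ℝ) < 1 / (n * exp β) := by
    have : (0 : ℝ) < n := Nat.cast_pos.2 j.pos
    positivity
  exact ⟨hbound, hpos.trans_le hbound⟩

/-- if `e^β ≥ n` then every token is aligned with its attention vector:
`⟨θⱼ, Aⱼ(Θ)⟩ ≥ 1/(n e^β) > 0`. -/
theorem alignment_lower_bound {d n : ℕ} (hn : 1 ≤ n) (β : ℝ) (hβ : 0 < β)
    (hnβ : (n : ℝ) ≤ Real.exp β)
    (θ : Fin n → EuclideanSpace ℝ (Fin d)) (hθ : ∀ j, ‖θ j‖ = 1) (j : Fin n) :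
    1 / (n * Real.exp β) ≤ ⟪θ j, attn β θ j⟫ ∧ 0 < ⟪θ j, attn β θ j⟫ :=
  alignment_lower_bound_general β hnβ θ hθ j
end

section
/- Let 2 ≤ n ≤ d and β > 0. Suppose Θ : [0,∞) → (S^{d−1})ⁿ is a C¹ curve satisfying the Post-LN dynamics θ̇ⱼ(t) = P_{θⱼ(t)} Aⱼ(Θ(t)) for every j and t, initialized at a symmetric orthogonal configuration, i.e. ⟨θⱼ(0), θₖ(0)⟩ = 0 for all j ≠ k. Then there is a C¹ function γ : [0,∞) → ℝ with γ(0) = 0 such that ⟨θⱼ(t), θₖ(t)⟩ = γ(t) for all t ≥ 0 and all j ≠ k, and γ satisfies the ODE γ̇(t) = 2 e^{βγ(t)} (1 − γ(t)) ((n−1)γ(t) + 1) / ((n−1) e^{βγ(t)} + e^{β}). -/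
/-!
The Gram matrix `G(t) = (⟪θⱼ(t), θₖ(t)⟫)` solves an autonomous ODE `Ġ = V(G)` with a `C¹`
right-hand side, and `V` commutes with simultaneous permutations of rows and columns. Since
`G(0) = I` is permutation invariant, uniqueness of solutions keeps `G(t)` permutation invariant, so
with its unit diagonal `G(t) = (1 - γ) I + γ J`. Evaluating `V` at such a matrix gives the ODE
for `γ`.
-/

open Filter Real
open scoped RealInnerProductSpace BigOperators

/-- Orthogonal projection onto the tangent space of the unit sphere at `θ`. -/
noncomputable def sphereProj {d : ℕ} (θ y : EuclideanSpace ℝ (Fin d)) :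
    EuclideanSpace ℝ (Fin d) :=
  y - ⟪y, θ⟫ • θ

open Set

/-- On `[t₀, t]` both trajectories have compact image, on which the `C¹` field is Lipschitz. -/
theorem ODE_solution_unique_Ici_of_contDiff {E : Type*} [NormedAddCommGroup E]
    [NormedSpace ℝ E] {v : E → E} (hv : ContDiff ℝ 1 v) {f g : ℝ → E} {t₀ : ℝ}
    (hf : ∀ t ∈ Ici t₀, HasDerivAt f (v (f t)) t) (hg : ∀ t ∈ Ici t₀, HasDerivAt g (v (g t)) t)
    (heq : f t₀ = g t₀) : EqOn f g (Ici t₀) := by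
  intro t ht
  have hIcc : Icc t₀ t ⊆ Ici t₀ := Icc_subset_Ici_self
  have hfc : ContinuousOn f (Icc t₀ t) := fun s hs =>
    (hf s (hIcc hs)).continuousAt.continuousWithinAt
  have hgc : ContinuousOn g (Icc t₀ t) := fun s hs =>
    (hg s (hIcc hs)).continuousAt.continuousWithinAt
  set K := f '' Icc t₀ t ∪ g '' Icc t₀ t
  have hK : IsCompact K :=
    (isCompact_Icc.image_of_continuousOn hfc).union (isCompact_Icc.image_of_continuousOn hgc)
  obtain ⟨L, hL⟩ := hv.locallyLipschitz.locallyLipschitzOn.exists_lipschitzOnWith_of_compact hK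
  exact ODE_solution_unique_of_mem_Icc_right (v := fun _ => v) (s := fun _ => K)
    (fun _ _ => hL) hfc
    (fun s hs => (hf s (hIcc (Ico_subset_Icc_self hs))).hasDerivWithinAt)
    (fun s hs => Or.inl ⟨s, Ico_subset_Icc_self hs, rfl⟩) hgc
    (fun s hs => (hg s (hIcc (Ico_subset_Icc_self hs))).hasDerivWithinAt)
    (fun s hs => Or.inr ⟨s, Ico_subset_Icc_self hs, rfl⟩) heq ⟨ht, le_rfl⟩

theorem Equiv.Perm.exists_apply_eq_and_apply_eq {ι : Type*} [DecidableEq ι] {j k a b : ι}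
    (hjk : j ≠ k) (hab : a ≠ b) : ∃ σ : Equiv.Perm ι, σ j = a ∧ σ k = b := by
  set c := Equiv.swap j a k
  have hca : c ≠ a := by
    simpa [c] using (Equiv.swap j a).injective.ne hjk.symm
  exact ⟨Equiv.swap c b * Equiv.swap j a, by simp [Equiv.swap_apply_of_ne_of_ne hca.symm hab],
    by simp [c]⟩

section Equiangular

variable {ι : Type*} [DecidableEq ι]

def equiangularGram (g : ℝ) : ι → ι → ℝ := fun j k => if j = k then 1 else g

theorem eq_equiangularGram_of_perm_invariant {M : ι → ι → ℝ}
    (hperm : ∀ (σ : Equiv.Perm ι) a b, M (σ a) (σ b) = M a b) (hdiag : ∀ a, M a a = 1)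
    {j k : ι} (hjk : j ≠ k) : M = equiangularGram (M j k) := by
  funext a b
  by_cases hab : a = b
  · simp [equiangularGram, hab, hdiag]
  · obtain ⟨σ, rfl, rfl⟩ := Equiv.Perm.exists_apply_eq_and_apply_eq hjk hab
    simp [equiangularGram, hab, hperm]

end Equiangular

section GramField

variable {ι : Type*} [Fintype ι] (β : ℝ)

theorem sum_exp_row_pos (M : ι → ι → ℝ) (j : ι) : 0 < ∑ l, exp (β * M j l) :=
  Finset.sum_pos (fun _ _ => exp_pos _) ⟨j, Finset.mem_univ j⟩

/-- `softmaxGram β M j k` is `⟪A_j(Θ), θ_k⟫` written in terms of the Gram matrix `M` of `Θ`. -/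
noncomputable def softmaxGram (M : ι → ι → ℝ) (j k : ι) : ℝ :=
  (∑ l, exp (β * M j l))⁻¹ * ∑ m, exp (β * M j m) * M m k

/-- The derivative of `⟪θ_j, θ_k⟫` under the Post-LN dynamics, as a function of the Gram matrix. -/
noncomputable def postLNGramField (M : ι → ι → ℝ) (j k : ι) : ℝ :=
  (softmaxGram β M j k - softmaxGram β M j j * M j k) +
    (softmaxGram β M k j - softmaxGram β M k k * M j k)

theorem contDiff_postLNGramField : ContDiff ℝ 1 (postLNGramField (ι := ι) β) := by
  refine contDiff_pi.2 fun j => contDiff_pi.2 fun k => ?_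
  unfold postLNGramField softmaxGram
  fun_prop (disch := exact fun M => (sum_exp_row_pos β M _).ne')

theorem softmaxGram_perm (M : ι → ι → ℝ) (σ : Equiv.Perm ι) (j k : ι) :
    softmaxGram β (fun a b => M (σ a) (σ b)) j k = softmaxGram β M (σ j) (σ k) := by
  simp only [softmaxGram, Equiv.sum_comp σ (fun l => exp (β * M (σ j) l)),
    Equiv.sum_comp σ (fun m => exp (β * M (σ j) m) * M m (σ k))]

theorem postLNGramField_perm (M : ι → ι → ℝ) (σ : Equiv.Perm ι) (j k : ι) :
    postLNGramField β (fun a b => M (σ a) (σ b)) j k = postLNGramField β M (σ j) (σ k) := by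
  simp only [postLNGramField, softmaxGram_perm]

theorem postLNGramField_solution_perm_invariant {β : ℝ} {G : ℝ → ι → ι → ℝ}
    (hG : ∀ t ∈ Ici (0 : ℝ), HasDerivAt G (postLNGramField β (G t)) t) (σ : Equiv.Perm ι)
    (h0 : ∀ a b, G 0 (σ a) (σ b) = G 0 a b) {t : ℝ} (ht : 0 ≤ t) (a b : ι) :
    G t (σ a) (σ b) = G t a b := by
  have hGσ : ∀ s ∈ Ici (0 : ℝ), HasDerivAt (fun u a b => G u (σ a) (σ b))
      (postLNGramField β (fun a b => G s (σ a) (σ b))) s := fun s hs =>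
    hasDerivAt_pi.2 fun a => hasDerivAt_pi.2 fun b => by
      rw [postLNGramField_perm]
      exact hasDerivAt_pi.1 (hasDerivAt_pi.1 (hG s hs) (σ a)) (σ b)
  exact congrFun₂
    (ODE_solution_unique_Ici_of_contDiff (contDiff_postLNGramField β) hGσ hG (funext₂ h0) ht) a b

variable [DecidableEq ι]

theorem sum_exp_equiangularGram (g : ℝ) (j : ι) :
    ∑ l, exp (β * equiangularGram g j l) = (Fintype.card ι - 1) * exp (β * g) + exp β := by
  rw [Fintype.sum_eq_add_sum_compl j, add_comm]
  congr 1
  · rw [Finset.sum_congr rfl fun l hl => by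
      rw [equiangularGram, if_neg (Ne.symm (Finset.mem_compl.1 hl ∘ Finset.mem_singleton.2))]]
    have : 1 ≤ Fintype.card ι := Fintype.card_pos_iff.2 ⟨j⟩
    simp [Finset.card_compl, Nat.cast_sub this]
  · simp [equiangularGram]

theorem softmaxGram_equiangularGram (g : ℝ) (j k : ι) :
    softmaxGram β (equiangularGram g) j k =
      g + (1 - g) * exp (β * equiangularGram g j k) / ∑ l, exp (β * equiangularGram g j l) := by
  have hsplit : ∀ m, exp (β * equiangularGram g j m) * equiangularGram g m k =
      g * exp (β * equiangularGram g j m) +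
        if m = k then (1 - g) * exp (β * equiangularGram g j m) else 0 := by
    intro m
    by_cases hm : m = k <;> simp [equiangularGram, hm] <;> ring
  have hS := (sum_exp_row_pos β (equiangularGram g) j).ne'
  rw [softmaxGram, Finset.sum_congr rfl fun m _ => hsplit m, Finset.sum_add_distrib,
    ← Finset.mul_sum, Finset.sum_ite_eq']
  field_simp
  simp

theorem postLNGramField_equiangularGram (g : ℝ) {j k : ι} (hjk : j ≠ k) :
    postLNGramField β (equiangularGram g) j k =
      2 * exp (β * g) * (1 - g) * ((Fintype.card ι - 1) * g + 1) /
        ((Fintype.card ι - 1) * exp (β * g) + exp β) := by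
  have hS := sum_exp_row_pos β (equiangularGram g) j
  simp only [postLNGramField, softmaxGram_equiangularGram, sum_exp_equiangularGram] at hS ⊢
  simp only [equiangularGram, ↓reduceIte, if_neg hjk, if_neg hjk.symm, mul_one]
  -- `field_simp` normalises `β * g` and the denominator differently unless they are atoms
  generalize exp (β * g) = E at hS ⊢
  generalize exp β = F at hS ⊢
  generalize hS' : (Fintype.card ι - 1) * E + F = S at hS ⊢
  field_simp
  linear_combination (-2 * (1 - g) * g) * hS'

end GramField

section PostLN

variable {d n : ℕ} {β : ℝ}

theorem inner_attn (θ : Fin n → EuclideanSpace ℝ (Fin d)) (j k : Fin n) :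
    ⟪attn β θ j, θ k⟫ = softmaxGram β (fun a b => ⟪θ a, θ b⟫) j k := by
  simp only [attn, softmaxGram, real_inner_smul_left, sum_inner]

theorem inner_sphereProj_attn (θ : Fin n → EuclideanSpace ℝ (Fin d)) (j k : Fin n) :
    ⟪sphereProj (θ j) (attn β θ j), θ k⟫ =
      softmaxGram β (fun a b => ⟪θ a, θ b⟫) j k -
        softmaxGram β (fun a b => ⟪θ a, θ b⟫) j j * ⟪θ j, θ k⟫ := by
  rw [sphereProj, inner_sub_left, real_inner_smul_left, inner_attn, inner_attn]

theorem hasDerivAt_gram_of_postLN {θ : ℝ → Fin n → EuclideanSpace ℝ (Fin d)} {t : ℝ}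
    (hθ : ∀ j, HasDerivAt (fun s => θ s j) (sphereProj (θ t j) (attn β (θ t) j)) t) :
    HasDerivAt (fun s j k => ⟪θ s j, θ s k⟫)
      (postLNGramField β (fun j k => ⟪θ t j, θ t k⟫)) t :=
  hasDerivAt_pi.2 fun j => hasDerivAt_pi.2 fun k => by
    refine ((hθ j).inner ℝ (hθ k)).congr_deriv ?_
    rw [real_inner_comm (sphereProj _ _) (θ t j), inner_sphereProj_attn, inner_sphereProj_attn,
      postLNGramField, real_inner_comm (θ t j) (θ t k)]
    ring

end PostLN

theorem postLN_symmetric_cosine_ODE_general (d n : ℕ) (hn : 2 ≤ n)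
    (β : ℝ)
    (θ : ℝ → Fin n → EuclideanSpace ℝ (Fin d))
    (hnorm : ∀ t, 0 ≤ t → ∀ j, ‖θ t j‖ = 1)
    (hdyn : ∀ t, 0 ≤ t → ∀ j,
      HasDerivAt (fun s => θ s j) (sphereProj (θ t j) (attn β (θ t) j)) t)
    (horth : ∀ j k : Fin n, j ≠ k → ⟪θ 0 j, θ 0 k⟫ = 0) :
    ∃ γ : ℝ → ℝ, γ 0 = 0 ∧
      (∀ t, 0 ≤ t → ∀ j k : Fin n, j ≠ k → ⟪θ t j, θ t k⟫ = γ t) ∧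
      (∀ t, 0 ≤ t → HasDerivAt γ
        (2 * Real.exp (β * γ t) * (1 - γ t) * ((n - 1) * γ t + 1) /
          ((n - 1) * Real.exp (β * γ t) + Real.exp β)) t) := by
  set G : ℝ → Fin n → Fin n → ℝ := fun t j k => ⟪θ t j, θ t k⟫
  have hG : ∀ t ∈ Ici (0 : ℝ), HasDerivAt G (postLNGramField β (G t)) t := fun t ht =>
    hasDerivAt_gram_of_postLN (hdyn t ht)
  have hdiag : ∀ t, 0 ≤ t → ∀ j, G t j j = 1 := fun t ht j => by simp [G, hnorm t ht]
  have h0 : G 0 = equiangularGram 0 := by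
    funext j k
    by_cases hjk : j = k
    · simp [equiangularGram, hjk, hdiag 0 le_rfl]
    · simp [equiangularGram, hjk, G, horth j k hjk]
  set j₀ : Fin n := ⟨0, by omega⟩
  set k₀ : Fin n := ⟨1, by omega⟩
  have hj₀k₀ : j₀ ≠ k₀ := by simp [j₀, k₀]
  have hsymm : ∀ t, 0 ≤ t → G t = equiangularGram (G t j₀ k₀) := fun t ht =>
    eq_equiangularGram_of_perm_invariant
      (fun σ => postLNGramField_solution_perm_invariant hG σ (by simp [h0, equiangularGram]) ht)
      (hdiag t ht) hj₀k₀
  refine ⟨fun t => G t j₀ k₀, by simp [h0, equiangularGram, hj₀k₀],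
    fun t ht j k hjk => by simpa [equiangularGram, hjk] using congrFun₂ (hsymm t ht) j k,
    fun t ht => ?_⟩
  have := hasDerivAt_pi.1 (hasDerivAt_pi.1 (hG t ht) j₀) k₀
  rw [hsymm t ht, postLNGramField_equiangularGram β _ hj₀k₀, Fintype.card_fin] at this
  exact this

/-- Post-LN dynamics from a symmetric orthogonal initialization: the common
cosine similarity `γ(t) = ⟨θⱼ(t), θₖ(t)⟩` (for `j ≠ k`) is well defined and satisfies the
symmetric Post-LN ODE. -/
theorem postLN_symmetric_cosine_ODE (d n : ℕ) (hn : 2 ≤ n) (hnd : n ≤ d)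
    (β : ℝ) (hβ : 0 < β)
    (θ : ℝ → Fin n → EuclideanSpace ℝ (Fin d))
    (hnorm : ∀ t, 0 ≤ t → ∀ j, ‖θ t j‖ = 1)
    (hdyn : ∀ t, 0 ≤ t → ∀ j,
      HasDerivAt (fun s => θ s j) (sphereProj (θ t j) (attn β (θ t) j)) t)
    (horth : ∀ j k : Fin n, j ≠ k → ⟪θ 0 j, θ 0 k⟫ = 0) :
    ∃ γ : ℝ → ℝ, γ 0 = 0 ∧
      (∀ t, 0 ≤ t → ∀ j k : Fin n, j ≠ k → ⟪θ t j, θ t k⟫ = γ t) ∧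
      (∀ t, 0 ≤ t → HasDerivAt γ
        (2 * Real.exp (β * γ t) * (1 - γ t) * ((n - 1) * γ t + 1) /
          ((n - 1) * Real.exp (β * γ t) + Real.exp β)) t) :=
  postLN_symmetric_cosine_ODE_general d n hn β θ hnorm hdyn horth
end

section
/- Let n ≥ 2 and β > 0, and let γ : [0,∞) → ℝ be a C¹ solution of the Post-LN symmetric cosine-similarity ODE γ̇(t) = 2 e^{βγ(t)} (1 − γ(t)) ((n−1)γ(t) + 1) / ((n−1) e^{βγ(t)} + e^{β}) with γ(0) = 0. Then γ is strictly increasing, 0 ≤ γ(t) < 1 for all t ≥ 0, γ(t) → 1 as t → ∞, and there exists a constant C > 0 such that e^{2t}(1 − γ(t)) → C as t → ∞; in particular γ̇(t) is asymptotically equivalent to 2C e^{−2t} as t → ∞. -/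
/-!
Write the equation as `γ' = (1 - γ) G(γ)` with
`G(x) = 2 e^{βx} ((n-1)x + 1) / ((n-1) e^{βx} + e^β)`. On `[0, 1]` the rate `G` satisfies
`c ≤ G ≤ 2` for some `c > 0` and `2 - G(x) ≤ 2 (1 + β) (1 - x)`. Barrier arguments keep `γ` in
`[0, 1)`: at `γ = 0` the velocity is positive, and `1 - γ` decays no faster than `e^{-2t}`.
Then `log (1 - γ)` has derivative `-G(γ) ≤ -c`, so `1 - γ t ≤ e^{-ct}`, and
`2 t + log (1 - γ t)` is nondecreasing with derivative `2 - G(γ) ≤ 2 (1 + β) e^{-ct}`, so it is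
bounded and converges to some `log C`.
-/

open Filter Real Set Topology

theorem le_of_deriv_lt_deriv_boundary_Ici {f f' B B' : ℝ → ℝ} {a : ℝ}
    (hf : ∀ t, a ≤ t → HasDerivAt f (f' t) t) (hB : ∀ t, HasDerivAt B (B' t) t)
    (ha : f a ≤ B a) (bound : ∀ t, a ≤ t → f t = B t → f' t < B' t) {t : ℝ} (ht : a ≤ t) :
    f t ≤ B t :=
  image_le_of_deriv_right_lt_deriv_boundary (b := t)
    (fun x hx => (hf x hx.1).continuousAt.continuousWithinAt)
    (fun x hx => (hf x hx.1).hasDerivWithinAt) ha hB (fun x hx => bound x hx.1) ⟨ht, le_rfl⟩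

theorem monotoneOn_Ici_of_hasDerivAt_nonneg {f f' : ℝ → ℝ} {a : ℝ}
    (hf : ∀ t, a ≤ t → HasDerivAt f (f' t) t) (hf' : ∀ t, a ≤ t → 0 ≤ f' t) :
    MonotoneOn f (Ici a) :=
  monotoneOn_of_hasDerivWithinAt_nonneg (convex_Ici a)
    (fun t ht => (hf t ht).continuousAt.continuousWithinAt)
    (fun t ht => (hf t (interior_subset ht)).hasDerivWithinAt)
    (fun t ht => hf' t (interior_subset ht))

theorem antitoneOn_Ici_of_hasDerivAt_nonpos {f f' : ℝ → ℝ} {a : ℝ}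
    (hf : ∀ t, a ≤ t → HasDerivAt f (f' t) t) (hf' : ∀ t, a ≤ t → f' t ≤ 0) :
    AntitoneOn f (Ici a) :=
  antitoneOn_of_hasDerivWithinAt_nonpos (convex_Ici a)
    (fun t ht => (hf t ht).continuousAt.continuousWithinAt)
    (fun t ht => (hf t (interior_subset ht)).hasDerivWithinAt)
    (fun t ht => hf' t (interior_subset ht))

theorem strictMonoOn_Ici_of_hasDerivAt_pos {f f' : ℝ → ℝ} {a : ℝ}
    (hf : ∀ t, a ≤ t → HasDerivAt f (f' t) t) (hf' : ∀ t, a ≤ t → 0 < f' t) :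
    StrictMonoOn f (Ici a) :=
  strictMonoOn_of_hasDerivWithinAt_pos (convex_Ici a)
    (fun t ht => (hf t ht).continuousAt.continuousWithinAt)
    (fun t ht => (hf t (interior_subset ht)).hasDerivWithinAt)
    (fun t ht => hf' t (interior_subset ht))

theorem MonotoneOn.exists_tendsto_atTop_of_le {f : ℝ → ℝ} {a M : ℝ} (hf : MonotoneOn f (Ici a))
    (hM : ∀ t, a ≤ t → f t ≤ M) : ∃ L, Tendsto f atTop (𝓝 L) := by
  have hmono : Monotone fun t => f (max a t) := fun s t hst =>
    hf (le_max_left a s) (le_max_left a t) (max_le_max le_rfl hst)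
  refine ⟨_, (tendsto_atTop_ciSup hmono ⟨M, ?_⟩).congr' ?_⟩
  · rintro _ ⟨t, rfl⟩
    exact hM _ (le_max_left a t)
  · filter_upwards [eventually_ge_atTop a] with t ht
    rw [max_eq_right ht]

theorem tendsto_nhdsLT_one_of_sub_le {G : ℝ → ℝ} {r K : ℝ} (hGr : ∀ x ∈ Ico 0 1, G x ≤ r)
    (hK : ∀ x ∈ Ico 0 1, r - G x ≤ K * (1 - x)) : Tendsto G (𝓝[<] 1) (𝓝 r) := by
  have hlower : Tendsto (fun x => r - K * (1 - x)) (𝓝[<] 1) (𝓝 r) := by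
    have hcont : Continuous fun x : ℝ => r - K * (1 - x) := by fun_prop
    simpa using (hcont.tendsto 1).mono_left nhdsWithin_le_nhds
  refine tendsto_of_tendsto_of_tendsto_of_le_of_le' hlower tendsto_const_nhds ?_ ?_ <;>
    filter_upwards [Ioo_mem_nhdsLT one_pos] with x hx
  · linarith [hK x ⟨hx.1.le, hx.2⟩]
  · exact hGr x ⟨hx.1.le, hx.2⟩

theorem hasDerivAt_exp_neg_mul (c s : ℝ) :
    HasDerivAt (fun s => exp (-(c * s))) (-c * exp (-(c * s))) s := by
  simpa [mul_comm] using ((hasDerivAt_id s).const_mul c).neg.exp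

def IsRelaxationSolution (γ G : ℝ → ℝ) : Prop :=
  ∀ t, 0 ≤ t → HasDerivAt γ ((1 - γ t) * G (γ t)) t

namespace IsRelaxationSolution

variable {γ G : ℝ → ℝ} {r c K : ℝ}

theorem nonneg (hγ : IsRelaxationSolution γ G) (h0 : 0 ≤ γ 0) (hG0 : 0 < G 0) {t : ℝ}
    (ht : 0 ≤ t) : 0 ≤ γ t := by
  have h := le_of_deriv_lt_deriv_boundary_Ici (f := fun s => -γ s) (B := fun _ => 0)
    (fun s hs => (hγ s hs).neg) (fun _ => hasDerivAt_const _ _) (by simpa using h0)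
    (fun s _ hs => by rw [neg_eq_zero.1 hs]; simpa using hG0) ht
  simpa using h

theorem mem_Ico (hγ : IsRelaxationSolution γ G) (h0 : γ 0 ∈ Ico 0 1) (hG0 : 0 < G 0)
    (hGr : ∀ x ∈ Ico 0 1, G x ≤ r) {t : ℝ} (ht : 0 ≤ t) : γ t ∈ Ico 0 1 := by
  set u₀ := 1 - γ 0
  have hu₀ : 0 < u₀ := sub_pos.2 h0.2
  -- `G ≤ r`: `1 - γ` decays no faster than `e^{-rs}`, so `γ` stays below `1 - u₀ e^{-(r+1)s}`
  have hB : ∀ s, HasDerivAt (fun s => 1 - u₀ * exp (-((r + 1) * s)))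
      (u₀ * exp (-((r + 1) * s)) * (r + 1)) s := fun s =>
    (((hasDerivAt_exp_neg_mul (r + 1) s).const_mul u₀).const_sub 1).congr_deriv (by ring)
  have hle := le_of_deriv_lt_deriv_boundary_Ici hγ hB (by simp [u₀]) ?_ ht
  · exact ⟨hγ.nonneg h0.1 hG0 ht, hle.trans_lt (by simp only [sub_lt_self_iff]; positivity)⟩
  · intro s hs hsB
    have hus : 1 - γ s = u₀ * exp (-((r + 1) * s)) := by rw [hsB]; ring
    have hpos : 0 < u₀ * exp (-((r + 1) * s)) := by positivity
    have hGs : G (γ s) ≤ r := hGr _ ⟨hγ.nonneg h0.1 hG0 hs, by linarith⟩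
    rw [hus]
    nlinarith

theorem strictMonoOn (hγ : IsRelaxationSolution γ G) (hmem : ∀ t, 0 ≤ t → γ t ∈ Ico 0 1)
    (hG : ∀ x ∈ Ico 0 1, 0 < G x) : StrictMonoOn γ (Ici 0) :=
  strictMonoOn_Ici_of_hasDerivAt_pos hγ fun t ht =>
    mul_pos (sub_pos.2 (hmem t ht).2) (hG _ (hmem t ht))

theorem hasDerivAt_log_one_sub (hγ : IsRelaxationSolution γ G)
    (hlt : ∀ t, 0 ≤ t → γ t < 1) {t : ℝ} (ht : 0 ≤ t) :
    HasDerivAt (fun s => log (1 - γ s)) (-G (γ t)) t := by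
  have hu : 1 - γ t ≠ 0 := (sub_pos.2 (hlt t ht)).ne'
  convert ((hγ t ht).const_sub 1).log hu using 1
  field_simp

theorem one_sub_le_exp (hγ : IsRelaxationSolution γ G) (hmem : ∀ t, 0 ≤ t → γ t ∈ Ico 0 1)
    (hcG : ∀ x ∈ Ico 0 1, c ≤ G x) {t : ℝ} (ht : 0 ≤ t) : 1 - γ t ≤ exp (-(c * t)) := by
  have hanti : AntitoneOn (fun s => c * s + log (1 - γ s)) (Ici 0) :=
    antitoneOn_Ici_of_hasDerivAt_nonpos
      (fun s hs => ((hasDerivAt_id s).const_mul c).add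
        (hγ.hasDerivAt_log_one_sub (fun t ht => (hmem t ht).2) hs))
      (fun s hs => by simpa using hcG _ (hmem s hs))
  have hdecay : c * t + log (1 - γ t) ≤ log (1 - γ 0) := by
    simpa using hanti self_mem_Ici ht ht
  have hlog0 : log (1 - γ 0) ≤ 0 :=
    log_nonpos (sub_nonneg.2 (hmem 0 le_rfl).2.le) (by linarith [(hmem 0 le_rfl).1])
  rw [← exp_log (sub_pos.2 (hmem t ht).2)]
  exact exp_le_exp.2 (by linarith)

theorem tendsto_one (hγ : IsRelaxationSolution γ G) (hmem : ∀ t, 0 ≤ t → γ t ∈ Ico 0 1)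
    (hc : 0 < c) (hcG : ∀ x ∈ Ico 0 1, c ≤ G x) : Tendsto γ atTop (𝓝 1) := by
  have hlower : Tendsto (fun t => 1 - exp (-(c * t))) atTop (𝓝 1) := by
    simpa using tendsto_const_nhds.sub
      (tendsto_exp_neg_atTop_nhds_zero.comp (tendsto_id.const_mul_atTop hc))
  refine tendsto_of_tendsto_of_tendsto_of_le_of_le' hlower tendsto_const_nhds ?_ ?_ <;>
    filter_upwards [eventually_ge_atTop 0] with t ht
  · linarith [hγ.one_sub_le_exp hmem hcG ht]
  · exact (hmem t ht).2.le

theorem exists_tendsto_exp_mul_one_sub (hγ : IsRelaxationSolution γ G)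
    (hmem : ∀ t, 0 ≤ t → γ t ∈ Ico 0 1) (hc : 0 < c) (hcG : ∀ x ∈ Ico 0 1, c ≤ G x)
    (hGr : ∀ x ∈ Ico 0 1, G x ≤ r) (hK : ∀ x ∈ Ico 0 1, r - G x ≤ K * (1 - x)) :
    ∃ C, 0 < C ∧ Tendsto (fun t => exp (r * t) * (1 - γ t)) atTop (𝓝 C) := by
  have hK0 : 0 ≤ K := by
    linarith [hGr 0 ⟨le_rfl, one_pos⟩, hK 0 ⟨le_rfl, one_pos⟩]
  set φ := fun s => r * s + log (1 - γ s)
  have hφ : ∀ s, 0 ≤ s → HasDerivAt φ (r * 1 + -G (γ s)) s := fun s hs =>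
    ((hasDerivAt_id s).const_mul r).add (hγ.hasDerivAt_log_one_sub (fun t ht => (hmem t ht).2) hs)
  have hmono : MonotoneOn φ (Ici 0) :=
    monotoneOn_Ici_of_hasDerivAt_nonneg hφ fun s hs => by linarith [hGr _ (hmem s hs)]
  -- `φ' = r - G(γ) ≤ K (1 - γ) ≤ K e^{-cs}`, the derivative of `-(K / c) e^{-cs}`
  have hanti : AntitoneOn (fun s => φ s + K / c * exp (-(c * s))) (Ici 0) := by
    refine antitoneOn_Ici_of_hasDerivAt_nonpos
      (fun s hs => (hφ s hs).add ((hasDerivAt_exp_neg_mul c s).const_mul (K / c)))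
      fun s hs => ?_
    have hdecay := mul_le_mul_of_nonneg_left (hγ.one_sub_le_exp hmem hcG hs) hK0
    have hKc : K / c * (-c * exp (-(c * s))) = -(K * exp (-(c * s))) := by
      field_simp
    rw [hKc]
    linarith [hK _ (hmem s hs)]
  obtain ⟨L, hL⟩ := hmono.exists_tendsto_atTop_of_le (M := φ 0 + K / c) fun t ht => by
    have h := hanti self_mem_Ici ht ht
    simp only [mul_zero, neg_zero, exp_zero, mul_one] at h
    linarith [mul_nonneg (div_nonneg hK0 hc.le) (exp_pos (-(c * t))).le]
  refine ⟨exp L, exp_pos L, ((continuous_exp.tendsto L).comp hL).congr' ?_⟩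
  filter_upwards [eventually_ge_atTop 0] with t ht
  simp [φ, exp_add, exp_log (sub_pos.2 (hmem t ht).2)]

theorem tendsto_deriv_div (hγ : IsRelaxationSolution γ G) (hmem : ∀ t, 0 ≤ t → γ t ∈ Ico 0 1)
    (hγ1 : Tendsto γ atTop (𝓝 1)) (hG : Tendsto G (𝓝[<] 1) (𝓝 r)) (hr : r ≠ 0) {C : ℝ}
    (hC : C ≠ 0) (hCt : Tendsto (fun t => exp (r * t) * (1 - γ t)) atTop (𝓝 C)) :
    Tendsto (fun t => deriv γ t / (r * C * exp (-(r * t)))) atTop (𝓝 1) := by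
  have hγ1' : Tendsto γ atTop (𝓝[<] 1) := tendsto_nhdsWithin_iff.2
    ⟨hγ1, (eventually_ge_atTop 0).mono fun t ht => (hmem t ht).2⟩
  have hprod := (hCt.div_const C).mul ((hG.comp hγ1').div_const r)
  rw [div_self hC, div_self hr, mul_one] at hprod
  refine hprod.congr' ?_
  filter_upwards [eventually_ge_atTop 0] with t ht
  rw [(hγ t ht).deriv, exp_neg, Function.comp_apply]
  field_simp

theorem asymptotics (hγ : IsRelaxationSolution γ G) (h0 : γ 0 ∈ Ico 0 1) (hc : 0 < c)
    (hcG : ∀ x ∈ Ico 0 1, c ≤ G x) (hGr : ∀ x ∈ Ico 0 1, G x ≤ r)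
    (hK : ∀ x ∈ Ico 0 1, r - G x ≤ K * (1 - x)) :
    StrictMonoOn γ (Ici 0) ∧ (∀ t, 0 ≤ t → 0 ≤ γ t ∧ γ t < 1) ∧ Tendsto γ atTop (𝓝 1) ∧
      ∃ C : ℝ, 0 < C ∧ Tendsto (fun t => exp (r * t) * (1 - γ t)) atTop (𝓝 C) ∧
        Tendsto (fun t => deriv γ t / (r * C * exp (-(r * t)))) atTop (𝓝 1) := by
  have hG0 : c ≤ G 0 := hcG 0 ⟨le_rfl, one_pos⟩
  have hmem : ∀ t, 0 ≤ t → γ t ∈ Ico 0 1 := fun t ht =>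
    hγ.mem_Ico h0 (hc.trans_le hG0) hGr ht
  have hr : 0 < r := hc.trans_le (hG0.trans (hGr 0 ⟨le_rfl, one_pos⟩))
  have hγ1 := hγ.tendsto_one hmem hc hcG
  obtain ⟨C, hC, hCt⟩ := hγ.exists_tendsto_exp_mul_one_sub hmem hc hcG hGr hK
  exact ⟨hγ.strictMonoOn hmem fun x hx => hc.trans_le (hcG x hx), hmem, hγ1, C, hC, hCt,
    hγ.tendsto_deriv_div hmem hγ1 (tendsto_nhdsLT_one_of_sub_le hGr hK) hr.ne' hC.ne' hCt⟩

end IsRelaxationSolution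

noncomputable def postLNRate (N β x : ℝ) : ℝ :=
  2 * exp (β * x) * (N * x + 1) / (N * exp (β * x) + exp β)

section postLNRate

variable {N β x : ℝ}

theorem exp_mul_le_exp (hβ : 0 ≤ β) (hx : x ≤ 1) : exp (β * x) ≤ exp β :=
  exp_le_exp.2 (by nlinarith)

theorem postLNRate_le_two (hN : 0 ≤ N) (hβ : 0 ≤ β) (hx : x ≤ 1) : postLNRate N β x ≤ 2 := by
  have hE := exp_pos (β * x)
  rw [postLNRate, div_le_iff₀ (by positivity)]
  nlinarith [exp_mul_le_exp hβ hx, mul_nonneg (mul_nonneg hN hE.le) (sub_nonneg.2 hx)]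

theorem le_postLNRate (hN : 0 ≤ N) (hβ : 0 ≤ β) (hx₀ : 0 ≤ x) (hx₁ : x ≤ 1) :
    2 / ((N + 1) * exp β) ≤ postLNRate N β x := by
  have hE : 1 ≤ exp (β * x) := one_le_exp (mul_nonneg hβ hx₀)
  have hNx : 0 ≤ N * x := mul_nonneg hN hx₀
  refine div_le_div₀ (by positivity) (by nlinarith) (by positivity) ?_
  nlinarith [exp_mul_le_exp hβ hx₁]

theorem two_sub_postLNRate_le (hN : 0 ≤ N) (hβ : 0 ≤ β) (hx : x ≤ 1) :
    2 - postLNRate N β x ≤ 2 * (1 + β) * (1 - x) := by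
  have hE := exp_pos (β * x)
  have hB := exp_pos β
  have hx' : 0 ≤ 1 - x := sub_nonneg.2 hx
  have htangent : exp β * (1 - β * (1 - x)) ≤ exp (β * x) := by
    have h := add_one_le_exp (-(β * (1 - x)))
    rw [show β * x = β + -(β * (1 - x)) by ring, exp_add]
    nlinarith
  rw [postLNRate, sub_le_iff_le_add, ← sub_le_iff_le_add', le_div_iff₀ (by positivity)]
  nlinarith [mul_nonneg (mul_nonneg (mul_nonneg hβ hN) hE.le) hx', mul_nonneg hx' hB.le]

end postLNRate

/-- Post-LN symmetric cosine-similarity ODE: asymptotics. -/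
theorem postLN_symmetric_ODE_asymptotics (n : ℕ) (hn : 2 ≤ n) (β : ℝ) (hβ : 0 < β)
    (γ : ℝ → ℝ) (h0 : γ 0 = 0)
    (hdyn : ∀ t, 0 ≤ t → HasDerivAt γ
      (2 * Real.exp (β * γ t) * (1 - γ t) * ((n - 1) * γ t + 1) /
        ((n - 1) * Real.exp (β * γ t) + Real.exp β)) t) :
    StrictMonoOn γ (Set.Ici 0) ∧
    (∀ t, 0 ≤ t → 0 ≤ γ t ∧ γ t < 1) ∧
    Tendsto γ atTop (nhds 1) ∧
    ∃ C : ℝ, 0 < C ∧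
      Tendsto (fun t => Real.exp (2 * t) * (1 - γ t)) atTop (nhds C) ∧
      Tendsto (fun t => deriv γ t / (2 * C * Real.exp (-(2 * t)))) atTop (nhds 1) := by
  have hN : (0 : ℝ) ≤ n - 1 := by
    have : (2 : ℝ) ≤ n := by exact_mod_cast hn
    linarith
  have hγ : IsRelaxationSolution γ (postLNRate (n - 1) β) := fun t ht => by
    convert hdyn t ht using 1
    rw [postLNRate]
    ring
  exact hγ.asymptotics (by simp [h0]) (by positivity)
    (fun x hx => le_postLNRate hN hβ.le hx.1 hx.2.le)
    (fun x hx => postLNRate_le_two hN hβ.le hx.2.le)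
    (fun x hx => two_sub_postLNRate_le hN hβ.le hx.2.le)
end

section
/- Let n ≥ 2, β > 0 and r₀ > 0, and let (γ, r) : [0,∞) → ℝ × (0,∞) be a C¹ solution of the Pre-LN symmetric system ṙ(t) = ((n−1) e^{βγ(t)} γ(t) + e^{β}) / ((n−1) e^{βγ(t)} + e^{β}) and γ̇(t) = 2 e^{βγ(t)} (1 − γ(t)) ((n−1)γ(t) + 1) / ( r(t) ((n−1) e^{βγ(t)} + e^{β}) ), with γ(0) = 0 and r(0) = r₀. Then γ is increasing with 0 ≤ γ(t) < 1 for all t, γ(t) → 1 as t → ∞, and r(t)/t → 1 as t → ∞. -/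
/-!
Both `1 - γ` and `(n - 1) γ + 1` solve linear equations `u' = a(t) u` with continuous `a`, so by
uniqueness for ODEs neither can reach `0`; hence `γ̇ > 0` and `0 ≤ γ < 1`. Since `ṙ ≤ 1`, we get
`r(t) ≤ r(0) + t`, so as long as `γ` stays below some `a < 1` we have `γ̇ ≥ c / (r(0) + t)`, and the
resulting logarithmic growth of `γ` pushes it above `a`; thus `γ → 1`. Then `ṙ → 1`, and a function
whose derivative tends to `1` grows like `t`.
-/

open Filter Real Set Topology

theorem eqOn_zero_of_hasDerivAt_mul_self {f a : ℝ → ℝ} {t₀ τ : ℝ}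
    (ha : ContinuousOn a (Icc t₀ τ)) (hf : ∀ t ∈ Icc t₀ τ, HasDerivAt f (a t * f t) t)
    (hτ : f τ = 0) : EqOn f 0 (Icc t₀ τ) := by
  obtain ⟨C, hC⟩ := isCompact_Icc.exists_bound_of_continuousOn ha
  have hlip : ∀ t ∈ Ioc t₀ τ, LipschitzOnWith C.toNNReal (a t * ·) univ := fun t ht =>
    ((lipschitzWith_smul (a t)).weaken (by
      rw [← NNReal.coe_le_coe, coe_nnnorm, Real.coe_toNNReal']
      exact (hC t (Ioc_subset_Icc_self ht)).trans (le_max_left _ _))).lipschitzOnWith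
  have hderiv : ∀ t ∈ Ioc t₀ τ, HasDerivWithinAt f (a t * f t) (Iic t) t := fun t ht =>
    (hf t (Ioc_subset_Icc_self ht)).hasDerivWithinAt
  exact ODE_solution_unique_of_mem_Icc_left hlip
    (fun t ht => (hf t ht).continuousAt.continuousWithinAt) hderiv (fun _ _ => mem_univ _)
    continuousOn_const (fun t _ => by
      rw [Pi.zero_apply, mul_zero]; exact hasDerivWithinAt_const t (Iic t) (0 : ℝ))
    (fun _ _ => mem_univ _) hτ

theorem pos_of_hasDerivAt_mul_self {f a : ℝ → ℝ} {t₀ : ℝ} (ha : ContinuousOn a (Ici t₀))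
    (hf : ∀ t, t₀ ≤ t → HasDerivAt f (a t * f t) t) (h₀ : 0 < f t₀) :
    ∀ t, t₀ ≤ t → 0 < f t := by
  intro t ht
  by_contra! hft
  obtain ⟨τ, hτ, hfτ⟩ : ∃ τ ∈ Icc t₀ t, f τ = 0 :=
    intermediate_value_Icc' ht (fun s hs => (hf s hs.1).continuousAt.continuousWithinAt)
      ⟨hft, h₀.le⟩
  have := eqOn_zero_of_hasDerivAt_mul_self (ha.mono Icc_subset_Ici_self)
    (fun s hs => hf s hs.1) hfτ ⟨le_rfl, hτ.1⟩
  exact h₀.ne' this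

theorem tendsto_atTop_of_hasDerivAt_ge_div {f f' : ℝ → ℝ} {c a : ℝ} (hc : 0 < c) (ha : 0 < a)
    (hf : ∀ t, 0 ≤ t → HasDerivAt f (f' t) t) (hf' : ∀ t, 0 ≤ t → c / (a + t) ≤ f' t) :
    Tendsto f atTop atTop := by
  have hlog : ∀ t, 0 ≤ t → HasDerivAt (fun s => c * log (a + s)) (c / (a + t)) t := fun t ht => by
    simpa [div_eq_mul_inv] using
      (((hasDerivAt_id t).const_add a).log (ne_of_gt (by rw [id]; linarith))).const_mul c
  have hmono : MonotoneOn (fun t => f t - c * log (a + t)) (Ici 0) :=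
    monotoneOn_Ici_of_hasDerivAt_nonneg (fun t ht => (hf t ht).sub (hlog t ht))
      (fun t ht => sub_nonneg.2 (hf' t ht))
  have hgrowth : Tendsto (fun t => f 0 - c * log a + c * log (a + t)) atTop atTop :=
    tendsto_atTop_add_const_left _ _
      ((tendsto_log_atTop.comp (tendsto_atTop_add_const_left _ a tendsto_id)).const_mul_atTop hc)
  refine tendsto_atTop_mono' _ ?_ hgrowth
  filter_upwards [eventually_ge_atTop 0] with t ht
  have := hmono self_mem_Ici ht ht
  simp only [add_zero] at this
  linarith

theorem tendsto_div_atTop_of_hasDerivAt_tendsto {f f' : ℝ → ℝ} {l : ℝ}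
    (hf : ∀ᶠ t in atTop, HasDerivAt f (f' t) t) (hf' : Tendsto f' atTop (𝓝 l)) :
    Tendsto (fun t => f t / t) atTop (𝓝 l) := by
  set g : ℝ → ℝ := fun t => f t - l * t
  have hg : ∀ᶠ t in atTop, HasDerivAt g (f' t - l) t := hf.mono fun t ht => by
    have := ht.sub ((hasDerivAt_id t).const_mul l)
    rwa [mul_one] at this
  have hg' : Tendsto (fun t => f' t - l) atTop (𝓝 0) := by simpa using hf'.sub_const l
  have hlittle : g =o[atTop] id := by
    refine Asymptotics.IsLittleO.of_bound fun c hc => ?_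
    obtain ⟨T, hT⟩ := eventually_atTop.1 <| (eventually_ge_atTop 0).and <| hg.and <|
      hg'.eventually (Metric.closedBall_mem_nhds 0 (half_pos hc))
    filter_upwards [eventually_ge_atTop T, eventually_ge_atTop (2 * ‖g T‖ / c)] with t htT htg
    have hmvt := norm_image_sub_le_of_norm_deriv_le_segment'
      (fun s hs => (hT s hs.1).2.1.hasDerivWithinAt)
      (fun s hs => by simpa using (hT s hs.1).2.2) t ⟨htT, le_rfl⟩
    have hT0 := (hT T le_rfl).1
    rw [div_le_iff₀ hc] at htg
    calc ‖g t‖ ≤ ‖g T‖ + ‖g t - g T‖ := norm_le_norm_add_norm_sub' _ _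
      _ ≤ c / 2 * t + c / 2 * t := add_le_add (by linarith) (hmvt.trans (by nlinarith))
      _ = c * ‖id t‖ := by rw [id, Real.norm_of_nonneg (by linarith)]; ring
  have := hlittle.tendsto_div_nhds_zero.add_const l
  rw [zero_add] at this
  refine this.congr' ?_
  filter_upwards [eventually_gt_atTop 0] with t ht
  simp only [g, id]
  field_simp
  ring

/-- With `N = n - 1`, `radialSpeed N β γ` is `ṙ` and `angularSpeed N β γ r` is `γ̇`. -/
noncomputable def radialSpeed (N β x : ℝ) : ℝ :=
  (N * exp (β * x) * x + exp β) / (N * exp (β * x) + exp β)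

noncomputable def angularSpeed (N β x ρ : ℝ) : ℝ :=
  2 * exp (β * x) * (1 - x) * (N * x + 1) / (ρ * (N * exp (β * x) + exp β))

section Speeds

variable {N : ℝ} (β : ℝ)

theorem mul_exp_add_exp_pos (hN : 0 ≤ N) (x : ℝ) : 0 < N * exp (β * x) + exp β := by
  positivity

theorem radialSpeed_le_one (hN : 0 ≤ N) {x : ℝ} (hx : x ≤ 1) : radialSpeed N β x ≤ 1 := by
  rw [radialSpeed, div_le_one (mul_exp_add_exp_pos β hN x)]
  nlinarith [mul_nonneg (mul_nonneg hN (exp_pos (β * x)).le) (sub_nonneg.2 hx)]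

theorem tendsto_radialSpeed_one (hN : 0 ≤ N) : Tendsto (radialSpeed N β) (𝓝 1) (𝓝 1) := by
  have hcont : Continuous (radialSpeed N β) := by
    unfold radialSpeed
    exact Continuous.div (by fun_prop) (by fun_prop) fun x => (mul_exp_add_exp_pos β hN x).ne'
  have hone : radialSpeed N β 1 = 1 := by
    have := (mul_exp_add_exp_pos β hN 1).ne'
    rw [mul_one] at this
    rw [radialSpeed, mul_one, mul_one, div_self this]
  simpa [hone] using hcont.tendsto 1

theorem angularSpeed_pos (hN : 0 ≤ N) {x ρ : ℝ} (hx : x < 1) (hNx : 0 < N * x + 1) (hρ : 0 < ρ) :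
    0 < angularSpeed N β x ρ :=
  div_pos (by have := sub_pos.2 hx; positivity) (mul_pos hρ (mul_exp_add_exp_pos β hN x))

theorem div_le_angularSpeed (hN : 0 ≤ N) (hβ : 0 ≤ β) {x a ρ R : ℝ} (hx : 0 ≤ x) (hxa : x ≤ a)
    (ha : a ≤ 1) (hρ : 0 < ρ) (hρR : ρ ≤ R) :
    2 * (1 - a) / ((N + 1) * exp β) / R ≤ angularSpeed N β x ρ := by
  have hx1 : x ≤ 1 := hxa.trans ha
  have hexp : exp (β * x) ≤ exp β := exp_le_exp.2 (by nlinarith)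
  rw [angularSpeed, div_div]
  apply div_le_div₀ (by have := sub_nonneg.2 hx1; positivity)
  · calc 2 * (1 - a) = 2 * 1 * (1 - a) * 1 := by ring
      _ ≤ 2 * exp (β * x) * (1 - x) * (N * x + 1) := by
        gcongr
        · exact one_le_exp (mul_nonneg hβ hx)
        · nlinarith
  · exact mul_pos hρ (mul_exp_add_exp_pos β hN x)
  · calc ρ * (N * exp (β * x) + exp β) ≤ R * ((N + 1) * exp β) :=
        mul_le_mul hρR (by nlinarith [mul_le_mul_of_nonneg_left hexp hN])
          (mul_exp_add_exp_pos β hN x).le (hρ.le.trans hρR)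
      _ = (N + 1) * exp β * R := by ring

end Speeds

structure PreLNSolution (N β : ℝ) (γ r : ℝ → ℝ) : Prop where
  r_pos : ∀ t, 0 ≤ t → 0 < r t
  hasDerivAt_r : ∀ t, 0 ≤ t → HasDerivAt r (radialSpeed N β (γ t)) t
  hasDerivAt_γ : ∀ t, 0 ≤ t → HasDerivAt γ (angularSpeed N β (γ t) (r t)) t

namespace PreLNSolution

variable {N β : ℝ} {γ r : ℝ → ℝ}

theorem continuousOn_γ (h : PreLNSolution N β γ r) : ContinuousOn γ (Ici 0) :=
  fun t ht => (h.hasDerivAt_γ t ht).continuousAt.continuousWithinAt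

theorem continuousOn_r (h : PreLNSolution N β γ r) : ContinuousOn r (Ici 0) :=
  fun t ht => (h.hasDerivAt_r t ht).continuousAt.continuousWithinAt

theorem r_mul_denom_ne_zero (h : PreLNSolution N β γ r) (hN : 0 ≤ N) :
    ∀ t ∈ Ici (0 : ℝ), r t * (N * exp (β * γ t) + exp β) ≠ 0 := fun t ht =>
  (mul_pos (h.r_pos t ht) (mul_exp_add_exp_pos β hN (γ t))).ne'

theorem one_sub_γ_pos (h : PreLNSolution N β γ r) (hN : 0 ≤ N) (h₀ : γ 0 < 1) :
    ∀ t, 0 ≤ t → 0 < 1 - γ t := by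
  have := h.continuousOn_γ
  have := h.continuousOn_r
  have := h.r_mul_denom_ne_zero hN
  refine pos_of_hasDerivAt_mul_self (a := fun t => -(2 * exp (β * γ t) * (N * γ t + 1)) /
    (r t * (N * exp (β * γ t) + exp β))) ?_
    (fun t ht => ((h.hasDerivAt_γ t ht).const_sub 1).congr_deriv (by rw [angularSpeed]; ring))
    (sub_pos.2 h₀)
  fun_prop (disch := assumption)

theorem mul_γ_add_one_pos (h : PreLNSolution N β γ r) (hN : 0 ≤ N) (h₀ : 0 < N * γ 0 + 1) :
    ∀ t, 0 ≤ t → 0 < N * γ t + 1 := by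
  have := h.continuousOn_γ
  have := h.continuousOn_r
  have := h.r_mul_denom_ne_zero hN
  refine pos_of_hasDerivAt_mul_self (a := fun t => 2 * N * exp (β * γ t) * (1 - γ t) /
    (r t * (N * exp (β * γ t) + exp β))) ?_
    (fun t ht => (((h.hasDerivAt_γ t ht).const_mul N).add_const 1).congr_deriv
      (by rw [angularSpeed]; ring)) h₀
  fun_prop (disch := assumption)

theorem monotoneOn_γ (h : PreLNSolution N β γ r) (hN : 0 ≤ N) (h₀ : 0 ≤ γ 0) (h₁ : γ 0 < 1) :
    MonotoneOn γ (Ici 0) :=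
  monotoneOn_Ici_of_hasDerivAt_nonneg h.hasDerivAt_γ fun t ht =>
    (angularSpeed_pos β hN (sub_pos.1 (h.one_sub_γ_pos hN h₁ t ht))
      (h.mul_γ_add_one_pos hN (add_pos_of_nonneg_of_pos (mul_nonneg hN h₀) one_pos) t ht)
      (h.r_pos t ht)).le

theorem γ_nonneg (h : PreLNSolution N β γ r) (hN : 0 ≤ N) (h₀ : 0 ≤ γ 0) (h₁ : γ 0 < 1) :
    ∀ t, 0 ≤ t → 0 ≤ γ t := fun _ ht =>
  h₀.trans (h.monotoneOn_γ hN h₀ h₁ self_mem_Ici ht ht)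

theorem r_le_add (h : PreLNSolution N β γ r) (hN : 0 ≤ N) (h₁ : γ 0 < 1) :
    ∀ t, 0 ≤ t → r t ≤ r 0 + t := by
  have hgap := monotoneOn_Ici_of_hasDerivAt_nonneg (f := fun t => r 0 + t - r t)
    (fun t ht => ((hasDerivAt_id t).const_add (r 0)).sub (h.hasDerivAt_r t ht))
    fun t ht => sub_nonneg.2 <|
      radialSpeed_le_one β hN (sub_pos.1 (h.one_sub_γ_pos hN h₁ t ht)).le
  intro t ht
  have := hgap self_mem_Ici ht ht
  simp only [add_zero, sub_self] at this
  linarith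

theorem exists_lt_γ (h : PreLNSolution N β γ r) (hN : 0 ≤ N) (hβ : 0 ≤ β) (h₀ : 0 ≤ γ 0)
    (h₁ : γ 0 < 1) {a : ℝ} (ha : a < 1) : ∃ T, 0 ≤ T ∧ a < γ T := by
  by_contra! hbdd
  have hc : 0 < 2 * (1 - a) / ((N + 1) * exp β) := by
    have := sub_pos.2 ha
    have : 0 < N + 1 := by linarith
    positivity
  have hunb : Tendsto γ atTop atTop :=
    tendsto_atTop_of_hasDerivAt_ge_div hc (h.r_pos 0 le_rfl) h.hasDerivAt_γ fun t ht =>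
      div_le_angularSpeed β hN hβ (h.γ_nonneg hN h₀ h₁ t ht) (hbdd t ht) ha.le (h.r_pos t ht)
        (h.r_le_add hN h₁ t ht)
  obtain ⟨t, hta, ht⟩ := ((hunb.eventually_gt_atTop a).and (eventually_ge_atTop 0)).exists
  exact (hbdd t ht).not_gt hta

theorem tendsto_γ (h : PreLNSolution N β γ r) (hN : 0 ≤ N) (hβ : 0 ≤ β) (h₀ : 0 ≤ γ 0)
    (h₁ : γ 0 < 1) : Tendsto γ atTop (𝓝 1) := by
  refine tendsto_order.2 ⟨fun a ha => ?_, fun b hb =>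
    (eventually_ge_atTop 0).mono fun t ht => (sub_pos.1 (h.one_sub_γ_pos hN h₁ t ht)).trans hb⟩
  obtain ⟨T, hT, haT⟩ := h.exists_lt_γ hN hβ h₀ h₁ ha
  filter_upwards [eventually_ge_atTop T] with t ht
  exact haT.trans_le (h.monotoneOn_γ hN h₀ h₁ hT (hT.trans ht) ht)

theorem tendsto_r_div (h : PreLNSolution N β γ r) (hN : 0 ≤ N) (hβ : 0 ≤ β) (h₀ : 0 ≤ γ 0)
    (h₁ : γ 0 < 1) : Tendsto (fun t => r t / t) atTop (𝓝 1) :=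
  tendsto_div_atTop_of_hasDerivAt_tendsto ((eventually_ge_atTop 0).mono h.hasDerivAt_r)
    ((tendsto_radialSpeed_one β hN).comp (h.tendsto_γ hN hβ h₀ h₁))

end PreLNSolution

theorem preLN_symmetric_system_asymptotics_general (n : ℕ) (hn : 2 ≤ n) (β : ℝ) (hβ : 0 < β)
    (γ r : ℝ → ℝ)
    (hrpos : ∀ t, 0 ≤ t → 0 < r t)
    (hγ0 : γ 0 = 0)
    (hrdyn : ∀ t, 0 ≤ t → HasDerivAt r
      (((n - 1) * Real.exp (β * γ t) * γ t + Real.exp β) /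
        ((n - 1) * Real.exp (β * γ t) + Real.exp β)) t)
    (hγdyn : ∀ t, 0 ≤ t → HasDerivAt γ
      (2 * Real.exp (β * γ t) * (1 - γ t) * ((n - 1) * γ t + 1) /
        (r t * ((n - 1) * Real.exp (β * γ t) + Real.exp β))) t) :
    MonotoneOn γ (Set.Ici 0) ∧
    (∀ t, 0 ≤ t → 0 ≤ γ t ∧ γ t < 1) ∧
    Tendsto γ atTop (nhds 1) ∧
    Tendsto (fun t => r t / t) atTop (nhds 1) := by
  have hN : 0 ≤ (n : ℝ) - 1 := by
    have : (2 : ℝ) ≤ n := by exact_mod_cast hn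
    linarith
  have hsol : PreLNSolution ((n : ℝ) - 1) β γ r := ⟨hrpos, hrdyn, hγdyn⟩
  have h₀ : 0 ≤ γ 0 := hγ0.ge
  have h₁ : γ 0 < 1 := by rw [hγ0]; exact one_pos
  exact ⟨hsol.monotoneOn_γ hN h₀ h₁,
    fun t ht => ⟨hsol.γ_nonneg hN h₀ h₁ t ht, sub_pos.1 (hsol.one_sub_γ_pos hN h₁ t ht)⟩,
    hsol.tendsto_γ hN hβ.le h₀ h₁, hsol.tendsto_r_div hN hβ.le h₀ h₁⟩

/-- Pre-LN symmetric system: asymptotics of cosine similarity and magnitude. -/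
theorem preLN_symmetric_system_asymptotics (n : ℕ) (hn : 2 ≤ n) (β : ℝ) (hβ : 0 < β)
    (r₀ : ℝ) (hr₀ : 0 < r₀) (γ r : ℝ → ℝ)
    (hrpos : ∀ t, 0 ≤ t → 0 < r t)
    (hγ0 : γ 0 = 0) (hr0 : r 0 = r₀)
    (hrdyn : ∀ t, 0 ≤ t → HasDerivAt r
      (((n - 1) * Real.exp (β * γ t) * γ t + Real.exp β) /
        ((n - 1) * Real.exp (β * γ t) + Real.exp β)) t)
    (hγdyn : ∀ t, 0 ≤ t → HasDerivAt γ
      (2 * Real.exp (β * γ t) * (1 - γ t) * ((n - 1) * γ t + 1) /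
        (r t * ((n - 1) * Real.exp (β * γ t) + Real.exp β))) t) :
    MonotoneOn γ (Set.Ici 0) ∧
    (∀ t, 0 ≤ t → 0 ≤ γ t ∧ γ t < 1) ∧
    Tendsto γ atTop (nhds 1) ∧
    Tendsto (fun t => r t / t) atTop (nhds 1) :=
  preLN_symmetric_system_asymptotics_general n hn β hβ γ r hrpos hγ0 hrdyn hγdyn
end

section
/- Let n ≥ 2, β > 0 and r₀ > 0, and let (γ, r) : [0,∞) → ℝ × (0,∞) be a C¹ solution of the Pre-LN symmetric system ṙ(t) = ((n−1) e^{βγ(t)} γ(t) + e^{β}) / ((n−1) e^{βγ(t)} + e^{β}) and γ̇(t) = 2 e^{βγ(t)} (1 − γ(t)) ((n−1)γ(t) + 1) / ( r(t) ((n−1) e^{βγ(t)} + e^{β}) ), with γ(0) = 0 and r(0) = r₀. Then for every t ≥ 0 one has r(t) ≤ r₀ + t, and 1 − γ(t) ≤ exp( − (2/(n e^{β})) ∫₀^t ds / r(s) ). -/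
/-! The gap `1 - γ` and the quantity `(n - 1) γ + 1` both solve scalar linear ODEs `f' = a f`
with continuous coefficients, so each is its initial value times `exp ∫ a`. Hence both stay
positive, `γ` is nondecreasing, and `γ` stays in `[0, 1]`. On that range the speed of `r` is at
most `1`, and since the softmax normalizer is at most `n e^β`, the coefficient `a` of the gap
dominates `2 / (n e^β r)`; the bound on the gap follows by comparing the exponents. -/

open Filter Real intervalIntegral
open Set

theorem eq_mul_exp_integral_of_hasDerivAt {f a : ℝ → ℝ} {t₀ t₁ : ℝ} (h : t₀ ≤ t₁)
    (ha : ContinuousOn a (Icc t₀ t₁)) (hf : ContinuousOn f (Icc t₀ t₁))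
    (hf' : ∀ t ∈ Ioo t₀ t₁, HasDerivAt f (a t * f t) t) :
    f t₁ = f t₀ * exp (∫ s in t₀..t₁, a s) := by
  rcases h.eq_or_lt with rfl | hlt
  · simp
  set A : ℝ → ℝ := fun t => ∫ s in t₀..t, a s
  have hA : ContinuousOn A (Icc t₀ t₁) := by
    simpa [uIcc_of_le h] using continuousOn_primitive_interval (a := t₀) (b := t₁)
      (ha.integrableOn_compact isCompact_Icc |>.mono_set (by rw [uIcc_of_le h]))
  have hA' : ∀ t ∈ Ioo t₀ t₁, HasDerivAt A (a t) t := fun t ht =>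
    integral_hasDerivAt_right
      ((ha.mono (Icc_subset_Icc_right ht.2.le)).intervalIntegrable_of_Icc ht.1.le)
      ((ha.mono Ioo_subset_Icc_self).stronglyMeasurableAtFilter isOpen_Ioo t ht)
      (ha.continuousAt (Icc_mem_nhds ht.1 ht.2))
  obtain ⟨c, -, hc⟩ := exists_hasDerivAt_eq_slope (fun t => f t * exp (-A t)) (fun _ => 0) hlt
    (hf.mul (hA.neg.rexp)) fun t ht =>
      ((hf' t ht).mul (hA' t ht).neg.exp).congr_deriv (by ring)
  have hAt₀ : A t₀ = 0 := integral_same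
  rw [eq_comm, div_eq_zero_iff, sub_eq_zero, hAt₀, neg_zero, exp_zero, mul_one] at hc
  rcases hc with hc | hc
  · rw [← hc, mul_assoc, ← exp_add, neg_add_cancel, exp_zero, mul_one]
  · exact absurd hc (sub_ne_zero.2 hlt.ne')

namespace PreLN

/-- Softmax normalizer of a token: weight `e^β` on itself and `e^{βx}` on each of its `n - 1`
neighbours. -/
noncomputable def partition (n : ℕ) (β x : ℝ) : ℝ := (n - 1) * exp (β * x) + exp β

/-- The magnitude equation reads `r' = magnitudeSpeed n β γ`. -/
noncomputable def magnitudeSpeed (n : ℕ) (β x : ℝ) : ℝ :=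
  ((n - 1) * exp (β * x) * x + exp β) / partition n β x

/-- The cosine equation reads `γ' = cosineRate n β γ r * (1 - γ) * ((n - 1) * γ + 1)`. -/
noncomputable def cosineRate (n : ℕ) (β x ρ : ℝ) : ℝ :=
  2 * exp (β * x) / (ρ * partition n β x)

section Estimates

variable {n : ℕ} {β x ρ : ℝ}

theorem partition_pos (hn : 1 ≤ n) (β x : ℝ) : 0 < partition n β x := by
  have : (1 : ℝ) ≤ n := by exact_mod_cast hn
  unfold partition
  nlinarith [exp_pos (β * x), exp_pos β]

theorem partition_le (hn : 1 ≤ n) (hβ : 0 ≤ β) (hx : x ≤ 1) :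
    partition n β x ≤ n * exp β := by
  have : (1 : ℝ) ≤ n := by exact_mod_cast hn
  have : exp (β * x) ≤ exp β := exp_le_exp.2 (by nlinarith)
  unfold partition
  nlinarith

theorem magnitudeSpeed_le_one (hn : 1 ≤ n) (hx : x ≤ 1) : magnitudeSpeed n β x ≤ 1 := by
  have : (1 : ℝ) ≤ n := by exact_mod_cast hn
  rw [magnitudeSpeed, div_le_one (partition_pos hn β x), partition]
  nlinarith [mul_nonneg (mul_nonneg (sub_nonneg.2 this) (exp_pos (β * x)).le) (sub_nonneg.2 hx)]

theorem cosineRate_pos (hn : 1 ≤ n) (hρ : 0 < ρ) : 0 < cosineRate n β x ρ :=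
  div_pos (by positivity) (mul_pos hρ (partition_pos hn β x))

theorem two_div_mul_inv_le_cosineRate_mul (hn : 1 ≤ n) (hβ : 0 ≤ β) (hρ : 0 < ρ)
    (hx₀ : 0 ≤ x) (hx₁ : x ≤ 1) :
    2 / (n * exp β) * ρ⁻¹ ≤ cosineRate n β x ρ * ((n - 1) * x + 1) := by
  have hn' : (1 : ℝ) ≤ n := by exact_mod_cast hn
  have hmass : 1 ≤ exp (β * x) * ((n - 1) * x + 1) := by
    nlinarith [one_le_exp (mul_nonneg hβ hx₀), mul_nonneg (sub_nonneg.2 hn') hx₀]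
  have hZ := partition_pos hn β x
  calc 2 / (n * exp β) * ρ⁻¹ = 2 / (ρ * (n * exp β)) := by ring
    _ ≤ 2 / (ρ * partition n β x) := by
        gcongr; exact partition_le hn hβ hx₁
    _ ≤ 2 * (exp (β * x) * ((n - 1) * x + 1)) / (ρ * partition n β x) := by
        gcongr; exact le_mul_of_one_le_right zero_le_two hmass
    _ = cosineRate n β x ρ * ((n - 1) * x + 1) := by rw [cosineRate]; ring

end Estimates

section Solution

variable {n : ℕ} {β : ℝ} {γ r : ℝ → ℝ}

theorem continuousOn_cosineRate {s : Set ℝ} (hn : 1 ≤ n) (hγ : ContinuousOn γ s)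
    (hr : ContinuousOn r s) (hr₀ : ∀ t ∈ s, 0 < r t) :
    ContinuousOn (fun t => cosineRate n β (γ t) (r t)) s := by
  simp only [cosineRate, partition]
  exact ContinuousOn.div (by fun_prop) (by fun_prop)
    fun t ht => (mul_pos (hr₀ t ht) (partition_pos hn β (γ t))).ne'

theorem one_sub_eq_exp_neg_integral (hn : 1 ≤ n) (hr₀ : ∀ t, 0 ≤ t → 0 < r t)
    (hr : ContinuousOn r (Ici 0)) (hγ0 : γ 0 = 0)
    (hγ : ∀ t, 0 ≤ t → HasDerivAt γ
      (cosineRate n β (γ t) (r t) * (1 - γ t) * ((n - 1) * γ t + 1)) t)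
    {t : ℝ} (ht : 0 ≤ t) :
    1 - γ t = exp (-∫ s in 0..t, cosineRate n β (γ s) (r s) * ((n - 1) * γ s + 1)) := by
  have hγc : ContinuousOn γ (Ici 0) := HasDerivAt.continuousOn hγ
  have := eq_mul_exp_integral_of_hasDerivAt (f := fun s => 1 - γ s)
    (a := fun s => -(cosineRate n β (γ s) (r s) * ((n - 1) * γ s + 1))) ht
    (((continuousOn_cosineRate hn hγc hr hr₀).mul (by fun_prop)).neg.mono Icc_subset_Ici_self)
    ((continuousOn_const.sub hγc).mono Icc_subset_Ici_self)
    fun s hs => ((hγ s hs.1.le).const_sub 1).congr_deriv (by ring)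
  simpa [hγ0, integral_neg] using this

theorem sub_one_mul_add_one_pos (hn : 1 ≤ n) (hr₀ : ∀ t, 0 ≤ t → 0 < r t)
    (hr : ContinuousOn r (Ici 0)) (hγ0 : γ 0 = 0)
    (hγ : ∀ t, 0 ≤ t → HasDerivAt γ
      (cosineRate n β (γ t) (r t) * (1 - γ t) * ((n - 1) * γ t + 1)) t)
    {t : ℝ} (ht : 0 ≤ t) : 0 < (n - 1) * γ t + 1 := by
  have hγc : ContinuousOn γ (Ici 0) := HasDerivAt.continuousOn hγ
  have := eq_mul_exp_integral_of_hasDerivAt (f := fun s => (n - 1) * γ s + 1)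
    (a := fun s => (n - 1) * cosineRate n β (γ s) (r s) * (1 - γ s)) ht
    (((continuousOn_cosineRate hn hγc hr hr₀).const_smul ((n : ℝ) - 1)).mul
      (by fun_prop) |>.mono Icc_subset_Ici_self)
    ((hγc.const_smul ((n : ℝ) - 1)).add continuousOn_const |>.mono Icc_subset_Ici_self)
    fun s hs => (((hγ s hs.1.le).const_mul ((n : ℝ) - 1)).add_const 1).congr_deriv (by ring)
  rw [this, hγ0, mul_zero, zero_add, one_mul]
  exact exp_pos _

theorem mem_Icc_zero_one (hn : 1 ≤ n) (hr₀ : ∀ t, 0 ≤ t → 0 < r t)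
    (hr : ContinuousOn r (Ici 0)) (hγ0 : γ 0 = 0)
    (hγ : ∀ t, 0 ≤ t → HasDerivAt γ
      (cosineRate n β (γ t) (r t) * (1 - γ t) * ((n - 1) * γ t + 1)) t)
    {t : ℝ} (ht : 0 ≤ t) : γ t ∈ Icc 0 1 := by
  have hgap : ∀ s, 0 ≤ s → 0 < 1 - γ s := fun s hs => by
    rw [one_sub_eq_exp_neg_integral hn hr₀ hr hγ0 hγ hs]; exact exp_pos _
  have hmono : MonotoneOn γ (Ici 0) := by
    refine monotoneOn_of_hasDerivWithinAt_nonneg (convex_Ici 0) (HasDerivAt.continuousOn hγ)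
      (fun s hs => (hγ s (interior_subset hs)).hasDerivWithinAt) fun s hs => ?_
    have hs : 0 ≤ s := interior_subset hs
    exact (mul_pos (mul_pos (cosineRate_pos hn (hr₀ s hs)) (hgap s hs))
      (sub_one_mul_add_one_pos hn hr₀ hr hγ0 hγ hs)).le
  exact ⟨hγ0 ▸ hmono self_mem_Ici ht ht, by linarith [hgap t ht]⟩

end Solution

end PreLN

open PreLN in
theorem preLN_symmetric_system_gronwall_general (n : ℕ) (hn : 2 ≤ n) (β : ℝ) (hβ : 0 < β)
    (r₀ : ℝ) (γ r : ℝ → ℝ)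
    (hrpos : ∀ t, 0 ≤ t → 0 < r t)
    (hγ0 : γ 0 = 0) (hr0 : r 0 = r₀)
    (hrdyn : ∀ t, 0 ≤ t → HasDerivAt r
      (((n - 1) * Real.exp (β * γ t) * γ t + Real.exp β) /
        ((n - 1) * Real.exp (β * γ t) + Real.exp β)) t)
    (hγdyn : ∀ t, 0 ≤ t → HasDerivAt γ
      (2 * Real.exp (β * γ t) * (1 - γ t) * ((n - 1) * γ t + 1) /
        (r t * ((n - 1) * Real.exp (β * γ t) + Real.exp β))) t) :
    ∀ t, 0 ≤ t →
      r t ≤ r₀ + t ∧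
      1 - γ t ≤ Real.exp (-(2 / (n * Real.exp β)) * ∫ s in (0:ℝ)..t, (r s)⁻¹) := by
  have hn₁ : 1 ≤ n := by omega
  have hrc : ContinuousOn r (Ici 0) := HasDerivAt.continuousOn hrdyn
  have hγ : ∀ t, 0 ≤ t → HasDerivAt γ
      (cosineRate n β (γ t) (r t) * (1 - γ t) * ((n - 1) * γ t + 1)) t := fun t ht =>
    (hγdyn t ht).congr_deriv (by rw [cosineRate, partition]; ring)
  have hγI : ∀ t, 0 ≤ t → γ t ∈ Icc 0 1 := fun t ht =>
    mem_Icc_zero_one hn₁ hrpos hrc hγ0 hγ ht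
  intro t ht
  constructor
  · exact image_le_of_deriv_right_le_deriv_boundary (hrc.mono Icc_subset_Ici_self)
      (fun s hs => (hrdyn s hs.1).hasDerivWithinAt) (B := fun s => r₀ + s) (by simp [hr0])
      (by fun_prop) (fun s _ => ((hasDerivAt_id s).const_add r₀).hasDerivWithinAt)
      (fun s hs => magnitudeSpeed_le_one hn₁ (hγI s hs.1).2) ⟨ht, le_rfl⟩
  have hγc : ContinuousOn γ (Icc 0 t) := HasDerivAt.continuousOn fun s hs => hγ s hs.1
  have hrc' : ContinuousOn r (Icc 0 t) := hrc.mono Icc_subset_Ici_self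
  rw [one_sub_eq_exp_neg_integral hn₁ hrpos hrc hγ0 hγ ht, neg_mul, exp_le_exp, neg_le_neg_iff,
    ← integral_const_mul]
  refine integral_mono_on ht ?_ ?_ fun s hs =>
    two_div_mul_inv_le_cosineRate_mul hn₁ hβ.le (hrpos s hs.1) (hγI s hs.1).1 (hγI s hs.1).2
  · exact ContinuousOn.intervalIntegrable_of_Icc ht
      (continuousOn_const.mul (hrc'.inv₀ fun s hs => (hrpos s hs.1).ne'))
  · exact ((continuousOn_cosineRate hn₁ hγc hrc' fun s hs => hrpos s hs.1).mul
      (by fun_prop)).intervalIntegrable_of_Icc ht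

/-- Pre-LN symmetric system: linear bound on the magnitude and Grönwall-type
bound on the cosine similarity. -/
theorem preLN_symmetric_system_gronwall (n : ℕ) (hn : 2 ≤ n) (β : ℝ) (hβ : 0 < β)
    (r₀ : ℝ) (hr₀ : 0 < r₀) (γ r : ℝ → ℝ)
    (hrpos : ∀ t, 0 ≤ t → 0 < r t)
    (hγ0 : γ 0 = 0) (hr0 : r 0 = r₀)
    (hrdyn : ∀ t, 0 ≤ t → HasDerivAt r
      (((n - 1) * Real.exp (β * γ t) * γ t + Real.exp β) /
        ((n - 1) * Real.exp (β * γ t) + Real.exp β)) t)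
    (hγdyn : ∀ t, 0 ≤ t → HasDerivAt γ
      (2 * Real.exp (β * γ t) * (1 - γ t) * ((n - 1) * γ t + 1) /
        (r t * ((n - 1) * Real.exp (β * γ t) + Real.exp β))) t) :
    ∀ t, 0 ≤ t →
      r t ≤ r₀ + t ∧
      1 - γ t ≤ Real.exp (-(2 / (n * Real.exp β)) * ∫ s in (0:ℝ)..t, (r s)⁻¹) :=
  preLN_symmetric_system_gronwall_general n hn β hβ r₀ γ r hrpos hγ0 hr0 hrdyn hγdyn
end

section
/- Let n ≥ 1, β > 0, δ ∈ (0,1), and let Q, K ∈ ℝ^{d×d} satisfy ‖QᵀK‖_op ≤ 1. Let θ₁, …, θₙ ∈ S^{d−1} satisfy ⟨θᵢ, θⱼ⟩ ≥ 1 − δ for all i, j, and let w_{kj} = exp(β⟨Qθₖ, Kθⱼ⟩)/∑_{l=1}^n exp(β⟨Qθₖ, Kθ_l⟩) be the softmax attention weights. Then for all k, j ∈ {1,…,n}: | w_{kj} − 1/n | ≤ (1/n)( e^{β√(2δ)} − 1 ). -/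
/-!
The scores of query `k` satisfy `⟪Q θₖ, K θₗ⟫ - ⟪Q θₖ, K θⱼ⟫ = ⟪θₖ, Qᵀ K (θₗ - θⱼ)⟫`, so they
differ pairwise by at most `‖θₗ - θⱼ‖ ≤ √(2δ)`. A softmax weight equals
`(∑ₗ exp (sₗ - sⱼ))⁻¹`, and when every exponent lies in `[-c, c]` this is squeezed between
`exp (-c) / n` and `exp c / n`; finally `1 - exp (-c) ≤ c ≤ exp c - 1`.
-/

open Real
open scoped RealInnerProductSpace

section Softmax

variable {ι : Type*} [Fintype ι]

lemma exp_div_sum_exp_eq_inv_sum_exp_sub (s : ι → ℝ) (j : ι) :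
    exp (s j) / ∑ l, exp (s l) = (∑ l, exp (s l - s j))⁻¹ := by
  simp_rw [Real.exp_sub, ← Finset.sum_div, inv_div]

lemma abs_exp_div_sum_exp_sub_inv_card_le (s : ι → ℝ) (j : ι) {c : ℝ}
    (hs : ∀ l, |s l - s j| ≤ c) :
    |exp (s j) / ∑ l, exp (s l) - 1 / Fintype.card ι| ≤
      1 / Fintype.card ι * (exp c - 1) := by
  have hn : (0 : ℝ) < Fintype.card ι := by
    have : Nonempty ι := ⟨j⟩
    exact_mod_cast Fintype.card_pos
  set S := ∑ l, exp (s l - s j)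
  have hS_le : S ≤ Fintype.card ι * exp c := by
    simpa using Finset.sum_le_card_nsmul Finset.univ _ _
      fun l _ ↦ exp_le_exp.2 (abs_le.1 (hs l)).2
  have hS_ge : Fintype.card ι * exp (-c) ≤ S := by
    simpa using Finset.card_nsmul_le_sum Finset.univ _ _
      fun l _ ↦ exp_le_exp.2 (abs_le.1 (hs l)).1
  have hS : 0 < S := (by positivity : (0 : ℝ) < _ * exp (-c)).trans_le hS_ge
  have h_upper : S⁻¹ ≤ exp c / Fintype.card ι := by
    calc S⁻¹ ≤ (Fintype.card ι * exp (-c))⁻¹ := inv_anti₀ (by positivity) hS_ge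
      _ = exp c / Fintype.card ι := by rw [exp_neg]; field_simp
  have h_lower : exp (-c) / Fintype.card ι ≤ S⁻¹ := by
    calc exp (-c) / Fintype.card ι = (Fintype.card ι * exp c)⁻¹ := by rw [exp_neg]; field_simp
      _ ≤ S⁻¹ := inv_anti₀ hS hS_le
  have h_exp : 1 - exp (-c) ≤ exp c - 1 := by
    linarith [add_one_le_exp c, add_one_le_exp (-c)]
  rw [exp_div_sum_exp_eq_inv_sum_exp_sub, abs_sub_le_iff]
  constructor
  · calc S⁻¹ - 1 / Fintype.card ι ≤ exp c / Fintype.card ι - 1 / Fintype.card ι := by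
          linarith
      _ = _ := by ring
  · calc 1 / Fintype.card ι - S⁻¹ ≤ 1 / Fintype.card ι * (1 - exp (-c)) := by
          rw [mul_sub, mul_one, one_div_mul_eq_div]; linarith
      _ ≤ _ := by gcongr

end Softmax

section Scores

variable {E : Type*} [NormedAddCommGroup E] [InnerProductSpace ℝ E]

lemma norm_sub_le_sqrt_of_one_sub_le_inner {x y : E} {δ : ℝ} (hx : ‖x‖ = 1) (hy : ‖y‖ = 1)
    (h : 1 - δ ≤ ⟪x, y⟫) : ‖x - y‖ ≤ √(2 * δ) := by
  apply Real.le_sqrt_of_sq_le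
  rw [norm_sub_sq_real, hx, hy]
  linarith

variable [CompleteSpace E] {F : Type*} [NormedAddCommGroup F] [InnerProductSpace ℝ F]
  [CompleteSpace F]

lemma abs_inner_sub_inner_le (Q K : E →L[ℝ] F) (u a b : E) :
    |⟪Q u, K a⟫ - ⟪Q u, K b⟫| ≤ ‖u‖ * (‖(ContinuousLinearMap.adjoint Q).comp K‖ * ‖a - b‖) := by
  rw [← inner_sub_right, ← map_sub, ← ContinuousLinearMap.adjoint_inner_right]
  exact (abs_real_inner_le_norm _ _).trans <|
    mul_le_mul_of_nonneg_left (((ContinuousLinearMap.adjoint Q).comp K).le_opNorm _)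
      (norm_nonneg _)

end Scores

theorem softmax_weights_nearly_uniform_general (d n : ℕ) (β : ℝ) (hβ : 0 < β) (δ : ℝ)
    (Q K : EuclideanSpace ℝ (Fin d) →L[ℝ] EuclideanSpace ℝ (Fin d))
    (hQK : ‖(ContinuousLinearMap.adjoint Q).comp K‖ ≤ 1)
    (θ : Fin n → EuclideanSpace ℝ (Fin d)) (hθ : ∀ j, ‖θ j‖ = 1)
    (hcone : ∀ i j : Fin n, 1 - δ ≤ ⟪θ i, θ j⟫) :
    ∀ k j : Fin n,
      |Real.exp (β * ⟪Q (θ k), K (θ j)⟫) / (∑ l, Real.exp (β * ⟪Q (θ k), K (θ l)⟫)) -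
          1 / n| ≤
        (1 / n) * (Real.exp (β * Real.sqrt (2 * δ)) - 1) := by
  intro k j
  have h_scores : ∀ l, |β * ⟪Q (θ k), K (θ l)⟫ - β * ⟪Q (θ k), K (θ j)⟫| ≤ β * √(2 * δ) := by
    intro l
    rw [← mul_sub, abs_mul, abs_of_pos hβ]
    gcongr
    calc _ ≤ ‖θ k‖ * (‖(ContinuousLinearMap.adjoint Q).comp K‖ * ‖θ l - θ j‖) :=
          abs_inner_sub_inner_le Q K _ _ _
      _ ≤ 1 * (1 * √(2 * δ)) := by
          rw [hθ k]
          gcongr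
          exact norm_sub_le_sqrt_of_one_sub_le_inner (hθ l) (hθ j) (hcone l j)
      _ = √(2 * δ) := by ring
  simpa using abs_exp_div_sum_exp_sub_inv_card_le (fun l ↦ β * ⟪Q (θ k), K (θ l)⟫) j h_scores

/-- softmax attention weights are nearly uniform in a local cone. -/
theorem softmax_weights_nearly_uniform (d n : ℕ) (hn : 1 ≤ n) (β : ℝ) (hβ : 0 < β)
    (δ : ℝ) (hδ : δ ∈ Set.Ioo (0 : ℝ) 1)
    (Q K : EuclideanSpace ℝ (Fin d) →L[ℝ] EuclideanSpace ℝ (Fin d))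
    (hQK : ‖(ContinuousLinearMap.adjoint Q).comp K‖ ≤ 1)
    (θ : Fin n → EuclideanSpace ℝ (Fin d)) (hθ : ∀ j, ‖θ j‖ = 1)
    (hcone : ∀ i j : Fin n, 1 - δ ≤ ⟪θ i, θ j⟫) :
    ∀ k j : Fin n,
      |Real.exp (β * ⟪Q (θ k), K (θ j)⟫) / (∑ l, Real.exp (β * ⟪Q (θ k), K (θ l)⟫)) -
          1 / n| ≤
        (1 / n) * (Real.exp (β * Real.sqrt (2 * δ)) - 1) :=
  softmax_weights_nearly_uniform_general d n β hβ δ Q K hQK θ hθ hcone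
end

section
/- Let N ≥ 1, let A be a real symmetric N×N matrix that is unstable, i.e. A has a positive eigenvalue, and let D be a real symmetric positive-definite N×N matrix. Then the product DA has a positive real eigenvalue; in other words, DA is also unstable. -/
/-!
Let `P = √D`. Then `D * A = P * (P * A)` and `P * A * P` have the same nonzero spectrum. The
symmetric matrix `P * A * P` is congruent to `A`, so its quadratic form is positive at `P⁻¹ v`
for an eigenvector `v` of `A` with positive eigenvalue; a Hermitian matrix whose quadratic form
takes a positive value has a positive eigenvalue.
-/

open Matrix
open scoped MatrixOrder

namespace Matrix

variable {n : Type*} [Fintype n]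

theorem IsHermitian.exists_pos_mem_spectrum_of_re_dotProduct_mulVec_pos [DecidableEq n]
    {𝕜 : Type*} [RCLike 𝕜] {A : Matrix n n 𝕜} (hA : A.IsHermitian) {x : n → 𝕜}
    (hx : 0 < RCLike.re (star x ⬝ᵥ (A *ᵥ x))) : ∃ μ ∈ spectrum ℝ A, 0 < μ := by
  by_contra! h
  have hA_nonpos : A ≤ 0 := by simpa using le_algebraMap_of_spectrum_le h hA.isSelfAdjoint
  have := (le_iff.mp hA_nonpos).re_dotProduct_nonneg x
  rw [zero_sub, neg_mulVec, dotProduct_neg, map_neg] at this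
  linarith

theorem exists_mulVec_eq_smul_of_mem_spectrum [DecidableEq n] {K : Type*} [Field K]
    {M : Matrix n n K} {μ : K} (h : μ ∈ spectrum K M) : ∃ v ≠ 0, M *ᵥ v = μ • v := by
  rw [← spectrum_toLin', ← Module.End.hasEigenvalue_iff_mem_spectrum] at h
  obtain ⟨v, hv⟩ := h.exists_hasEigenvector
  exact ⟨v, hv.2, Module.End.mem_eigenspace_iff.mp hv.1⟩

theorem star_dotProduct_mulVec_pos_of_mulVec_eq_smul {A : Matrix n n ℝ} {μ : ℝ} {v : n → ℝ}
    (hμ : 0 < μ) (hv : v ≠ 0) (hAv : A *ᵥ v = μ • v) : 0 < star v ⬝ᵥ (A *ᵥ v) := by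
  rw [hAv, dotProduct_smul, smul_eq_mul]
  exact mul_pos hμ (dotProduct_star_self_pos_iff.mpr hv)

theorem star_dotProduct_conjTranspose_mul_mul_mulVec {R : Type*} [CommRing R] [StarRing R]
    (A P : Matrix n n R) (w : n → R) :
    star w ⬝ᵥ ((Pᴴ * A * P) *ᵥ w) = star (P *ᵥ w) ⬝ᵥ (A *ᵥ (P *ᵥ w)) := by
  simp only [star_mulVec, dotProduct_mulVec, vecMul_vecMul, ← mulVec_mulVec]

end Matrix

theorem posDef_mul_unstable_is_unstable_general (N : ℕ)
    (A D : Matrix (Fin N) (Fin N) ℝ)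
    (hA : A.IsSymm) (hD : D.PosDef)
    (hunstable : ∃ (μ : ℝ) (v : Fin N → ℝ), 0 < μ ∧ v ≠ 0 ∧ A *ᵥ v = μ • v) :
    ∃ (μ : ℝ) (v : Fin N → ℝ), 0 < μ ∧ v ≠ 0 ∧ (D * A) *ᵥ v = μ • v := by
  obtain ⟨μ, v, hμ, hv, hAv⟩ := hunstable
  set P := CFC.sqrt D
  have hP : P.IsHermitian := (CFC.sqrt_nonneg D).posSemidef.isHermitian
  obtain ⟨w, rfl⟩ := mulVec_surjective_iff_isUnit.mpr ((CFC.isUnit_sqrt_iff D).mpr hD.isUnit) v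
  have hB : (P * A * P).IsHermitian := by
    simpa only [hP.eq] using isHermitian_conjTranspose_mul_mul P (isHermitian_iff_isSymm.mpr hA)
  have hBw : 0 < RCLike.re (star w ⬝ᵥ ((P * A * P) *ᵥ w)) := by
    nth_rw 1 [← hP.eq]
    rw [star_dotProduct_conjTranspose_mul_mul_mulVec, RCLike.re_to_real]
    exact star_dotProduct_mulVec_pos_of_mulVec_eq_smul hμ hv hAv
  obtain ⟨l, hl, hl_pos⟩ := hB.exists_pos_mem_spectrum_of_re_dotProduct_mulVec_pos hBw
  have hl_DA : l ∈ spectrum ℝ (D * A) := by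
    have hσ := spectrum.nonzero_mul_comm (𝕜 := ℝ) (P * A) P
    rw [← mul_assoc, CFC.sqrt_mul_sqrt_self D] at hσ
    exact (hσ.subset ⟨hl, hl_pos.ne'⟩).1
  obtain ⟨u, hu, hDAu⟩ := exists_mulVec_eq_smul_of_mem_spectrum hl_DA
  exact ⟨l, u, hl_pos, hu, hDAu⟩

/-- the product of a symmetric positive-definite matrix and an unstable
symmetric matrix is unstable: if the real symmetric matrix `A` has a positive eigenvalue and
`D` is symmetric positive definite, then `D * A` has a positive real eigenvalue. -/
theorem posDef_mul_unstable_is_unstable (N : ℕ) (hN : 1 ≤ N)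
    (A D : Matrix (Fin N) (Fin N) ℝ)
    (hA : A.IsSymm) (hD : D.PosDef)
    (hunstable : ∃ (μ : ℝ) (v : Fin N → ℝ), 0 < μ ∧ v ≠ 0 ∧ A *ᵥ v = μ • v) :
    ∃ (μ : ℝ) (v : Fin N → ℝ), 0 < μ ∧ v ≠ 0 ∧ (D * A) *ᵥ v = μ • v :=
  posDef_mul_unstable_is_unstable_general N A D hA hD hunstable
end
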